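/- Let 𝔾 = (V, E) be a finite simple undirected connected graph, let k ≥ 2 be an integer, and let i ∈ V with N_i^k nonempty. Let L_i^kc be the Laplacian matrix of the subgraph G_i = (N_i^k, E_i) induced by 𝔾 on N_i^k, and let H_i^kc be the diagonal matrix indexed by N_i^k whose diagonal entry at vertex v is the number of common neighbors |N_v ∩ N_i| of v and i in 𝔾. Then the matrix M_i^kc = L_i^kc + H_i^kc is symmetric positive definite. -/

import Mathlib

/-!
The Laplacian is positive semidefinite and its quadratic form vanishes only on vectors that are
constant on the connected components of the induced subgraph, while the diagonal term is
nonnegative. So `L + H` is positive definite as soon as every component of the induced subgraph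
contains a vertex with a positive diagonal entry. Walking along a shortest path towards `i` stays
inside the `k`-hop neighborhood until it reaches distance `2`, and a vertex at distance `2` from `i`
has a common neighbor with it.
-/

open Matrix

/-- The `k`-hop neighborhood of a vertex `i`: vertices at graph distance at least `2`
and at most `k` from `i`. -/
def khop {V : Type*} (G : SimpleGraph V) (k : ℕ) (i : V) : Set V :=
  {v | 2 ≤ G.dist v i ∧ G.dist v i ≤ k}

namespace SimpleGraph

variable {V : Type*} {G : SimpleGraph V} {u v : V}

theorem exists_adj_dist_add_one_eq (h : G.dist u v ≠ 0) :
    ∃ w, G.Adj u w ∧ G.dist w v + 1 = G.dist u v := by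
  obtain ⟨p, hp⟩ := (Reachable.of_dist_ne_zero h).exists_walk_length_eq_dist
  have hnil : ¬p.Nil := fun hnil => h (hp ▸ hnil.length_eq_zero)
  refine ⟨p.snd, p.adj_snd hnil, le_antisymm ?_ ?_⟩
  · rw [← hp, ← p.length_tail_add_one hnil]
    exact Nat.add_le_add_right (dist_le p.tail) 1
  · have := (p.adj_snd hnil).reachable.dist_triangle_left v
    rw [dist_eq_one_iff_adj.2 (p.adj_snd hnil)] at this
    omega

theorem commonNeighbors_nonempty_of_dist_eq_two (h : G.dist u v = 2) :
    (G.commonNeighbors u v).Nonempty := by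
  have hr : G.Reachable u v := Reachable.of_dist_ne_zero (by omega)
  exact (edist_eq_two_iff.1 (by rw [← hr.coe_dist_eq_edist, h]; rfl)).2.2

theorem posDef_lapMatrix_add_diagonal {W : Type*} [Fintype W] [DecidableEq W]
    (H : SimpleGraph W) [DecidableRel H.Adj] {d : W → ℝ} (hd : 0 ≤ d)
    (hreach : ∀ v, ∃ w, H.Reachable v w ∧ 0 < d w) :
    (H.lapMatrix ℝ + diagonal d).PosDef := by
  have hL := H.posSemidef_lapMatrix ℝ
  refine posDef_iff_dotProduct_mulVec.2 ⟨hL.1.add (isHermitian_diagonal d), fun x hx => ?_⟩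
  have hLx : 0 ≤ x ⬝ᵥ H.lapMatrix ℝ *ᵥ x := by simpa using hL.dotProduct_mulVec_nonneg x
  have hDx : x ⬝ᵥ diagonal d *ᵥ x = ∑ v, d v * x v ^ 2 := by
    simp only [dotProduct, mulVec_diagonal]
    exact Finset.sum_congr rfl fun v _ => by ring
  rw [star_trivial, add_mulVec, dotProduct_add, hDx]
  have hterm : ∀ v, 0 ≤ d v * x v ^ 2 := fun v => mul_nonneg (hd v) (sq_nonneg _)
  rcases hLx.lt_or_eq with hLpos | hLzero
  · exact add_pos_of_pos_of_nonneg hLpos (Finset.sum_nonneg fun v _ => hterm v)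
  have hconst : ∀ a b, H.Reachable a b → x a = x b := by
    rw [← lapMatrix_toLinearMap₂'_apply'_eq_zero_iff_forall_reachable, toLinearMap₂'_apply']
    exact hLzero.symm
  obtain ⟨v, hv⟩ := Function.ne_iff.1 hx
  obtain ⟨w, hvw, hw⟩ := hreach v
  rw [← hLzero, zero_add]
  have hxw : x w ≠ 0 := hconst v w hvw ▸ hv
  exact Finset.sum_pos' (fun v _ => hterm v) ⟨w, Finset.mem_univ w, by positivity⟩

end SimpleGraph

theorem exists_reachable_induce_khop_dist_eq_two {V : Type*} (G : SimpleGraph V) (k : ℕ) (i : V)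
    (v : khop G k i) : ∃ w : khop G k i, (G.induce (khop G k i)).Reachable v w ∧ G.dist w i = 2 := by
  obtain ⟨n, hn⟩ := Nat.exists_eq_add_of_le' v.2.1
  induction n generalizing v with
  | zero => exact ⟨v, .refl v, hn⟩
  | succ n ih =>
    obtain ⟨u, hvu, hu⟩ := G.exists_adj_dist_add_one_eq (v := i) (u := v) (by omega)
    have hu_mem : u ∈ khop G k i := ⟨by omega, by have := v.2.2; omega⟩
    obtain ⟨w, huw, hw⟩ := ih ⟨u, hu_mem⟩ (by dsimp only; omega)
    exact ⟨w, (show (G.induce (khop G k i)).Adj v ⟨u, hu_mem⟩ from hvu).reachable.trans huw, hw⟩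

open scoped Classical in
theorem stmt3_general {V : Type*} [Fintype V] [DecidableEq V] (G : SimpleGraph V) (k : ℕ) (i : V) :
    ((G.induce (khop G k i)).lapMatrix ℝ
      + Matrix.diagonal
          (fun v : khop G k i => ((G.neighborSet (v : V) ∩ G.neighborSet i).ncard : ℝ))).PosDef := by
  refine (G.induce (khop G k i)).posDef_lapMatrix_add_diagonal (fun v => by positivity) fun v => ?_
  obtain ⟨w, hvw, hw⟩ := exists_reachable_induce_khop_dist_eq_two G k i v
  refine ⟨w, hvw, ?_⟩
  rw [← SimpleGraph.commonNeighbors_eq]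
  exact_mod_cast (SimpleGraph.commonNeighbors_nonempty_of_dist_eq_two hw).ncard_pos (Set.toFinite _)

open scoped Classical in
/-- The matrix `M = L + H`, where `L` is the Laplacian of the subgraph induced on the
`k`-hop neighborhood of `i` and `H` is the diagonal matrix of numbers of common neighbors
with `i`, is symmetric positive definite. -/
theorem stmt3 {V : Type*} [Fintype V] [DecidableEq V] (G : SimpleGraph V)
    (hG : G.Connected) (k : ℕ) (hk : 2 ≤ k) (i : V) (hne : (khop G k i).Nonempty) :
    ((G.induce (khop G k i)).lapMatrix ℝ
      + Matrix.diagonal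
          (fun v : khop G k i => ((G.neighborSet (v : V) ∩ G.neighborSet i).ncard : ℝ))).PosDef :=
  stmt3_general G k i
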